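/- arXiv:1209.5569 — 2 statements merged into one kernel-verified Lean document; each statement's English description precedes it below -/
import Mathlib

section
/- Let C be a covering of a finite nonempty set U. For every X ∈ P, the set XL(Xᶜ) is the pseudocomplement of X in the lattice (P, ⊆): XL(Xᶜ) ∈ P, X ∩ XL(Xᶜ) = ∅, and for every Y ∈ P with X ∩ Y = ∅ one has Y ⊆ XL(Xᶜ). -/
open Set

variable {U : Type*}

/-- The neighborhood of `x` w.r.t. the covering `C`: the intersection of all
blocks of `C` containing `x`. -/
def nbhd (C : Set (Set U)) (x : U) : Set U := ⋂₀ {K | K ∈ C ∧ x ∈ K}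

/-- The sixth-type lower approximation. -/
def xL (C : Set (Set U)) (X : Set U) : Set U := {x | nbhd C x ⊆ X}

/-- The fixed point set of neighborhoods. -/
def pFix (C : Set (Set U)) : Set (Set U) := {X | xL C X = X}

/-!
`XL` is an interior operator: it is monotone, deflationary because `x ∈ N(x)`, and idempotent
because `y ∈ N(x)` implies `N(y) ⊆ N(x)`. Its fixed points `P` are therefore the open sets of
an Alexandrov topology, and `XL(Xᶜ)` is the interior of `Xᶜ`, i.e. the largest element of `P`
disjoint from `X`.
-/

section Neighborhood

variable (C : Set (Set U))

theorem mem_nbhd_self (x : U) : x ∈ nbhd C x :=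
  mem_sInter.mpr fun _ hK => hK.2

theorem nbhd_subset_of_mem {x y : U} (hy : y ∈ nbhd C x) : nbhd C y ⊆ nbhd C x :=
  fun _ hz => mem_sInter.mpr fun K hK => mem_sInter.mp hz K ⟨hK.1, mem_sInter.mp hy K hK⟩

theorem xL_mono : Monotone (xL C) :=
  fun _ _ hXY _ hx => hx.trans hXY

theorem xL_subset (X : Set U) : xL C X ⊆ X :=
  fun x hx => hx (mem_nbhd_self C x)

theorem xL_mem_pFix (X : Set U) : xL C X ∈ pFix C := by
  refine (xL_subset C _).antisymm fun x hx y hy => ?_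
  exact (nbhd_subset_of_mem C hy).trans hx

end Neighborhood

theorem stmt5_general (C : Set (Set U))
    (X : Set U) :
    xL C Xᶜ ∈ pFix C ∧ X ∩ xL C Xᶜ = ∅ ∧
    ∀ Y ∈ pFix C, X ∩ Y = ∅ → Y ⊆ xL C Xᶜ := by
  refine ⟨xL_mem_pFix C Xᶜ, ?_, fun Y hY hXY => ?_⟩
  · exact subset_empty_iff.mp <|
      (inter_subset_inter_right X (xL_subset C Xᶜ)).trans (inter_compl_self X).subset
  · calc Y = xL C Y := hY.symm
      _ ⊆ xL C Xᶜ := xL_mono C (disjoint_iff_inter_eq_empty.mpr hXY).subset_compl_left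

/-- for every `X ∈ P`, `XL(Xᶜ)` is the pseudocomplement of `X` in
the lattice `(P, ⊆)`. -/
theorem stmt5 [Fintype U] [Nonempty U] (C : Set (Set U))
    (hne : ∀ K ∈ C, K.Nonempty) (hcov : ⋃₀ C = Set.univ)
    (X : Set U) (hX : X ∈ pFix C) :
    xL C Xᶜ ∈ pFix C ∧ X ∩ xL C Xᶜ = ∅ ∧
    ∀ Y ∈ pFix C, X ∩ Y = ∅ → Y ⊆ xL C Xᶜ :=
  stmt5_general C X
end

section
/- Let C be a covering of a finite nonempty set U such that the family of irreducible elements of C (which equals the reduction reduct(C) of C) is a partition of U. Then for every X ∈ F the complement Xᶜ = U \ X also belongs to F; consequently (F, ⊆) is a Boolean lattice (a complemented distributive bounded lattice with least element ∅ and greatest element U). -/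
/-!
By finiteness, every point of a member of `C` lies in an irreducible member contained in it, so a
fixed point `X` is a union of blocks of `reduct(C)`. When these blocks partition `U`, a block that
meets `X` is the block through that point inside `X`, so every block lies in `X` or in `Xᶜ`, and
`Xᶜ` is a union of blocks too. Fixed points are always closed under `∪` and contain `∅`; `U` and
`∩` then follow by complementation.
-/

open Set

variable {U : Type*}

/-- The first-type lower approximation w.r.t. the covering `C`. -/
def fL (C : Set (Set U)) (X : Set U) : Set U := ⋃₀ {K | K ∈ C ∧ K ⊆ X}

/-- The fixed point set of covering. -/
def fFix (C : Set (Set U)) : Set (Set U) := {X | fL C X = X}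

/-- `K` is reducible in `C` if it is a union of some sets in `C \ {K}`. -/
def covReducible (C : Set (Set U)) (K : Set U) : Prop := ∃ S ⊆ C \ {K}, K = ⋃₀ S

/-- The minimal description of `x`. -/
def md (C : Set (Set U)) (x : U) : Set (Set U) :=
  {K | K ∈ C ∧ x ∈ K ∧ ∀ S ∈ C, x ∈ S → S ⊆ K → S = K}

/-- `C` is unary if `|md x| = 1` for every `x`. -/
def isUnary (C : Set (Set U)) : Prop := ∀ x : U, ∃! K : Set U, K ∈ md C x

/-- The join-irreducible elements of the lattice `(fFix C, ⊆)`. -/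
def jIrr (C : Set (Set U)) : Set (Set U) :=
  {A | A ∈ fFix C ∧ ∀ X ∈ fFix C, ∀ Y ∈ fFix C, A = X ∪ Y → A = X ∨ A = Y}

def reduct (C : Set (Set U)) : Set (Set U) := {K | K ∈ C ∧ ¬ covReducible C K}

lemma exists_irreducible_subset [Finite U] (C : Set (Set U)) {K : Set U} (hK : K ∈ C) {x : U}
    (hx : x ∈ K) : ∃ B ∈ C, ¬ covReducible C B ∧ x ∈ B ∧ B ⊆ K := by
  induction K using WellFoundedLT.induction with
  | ind K ih =>
    by_cases hred : covReducible C K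
    -- `K` is a union of other members; the one containing `x` is strictly smaller.
    · obtain ⟨S, hSC, rfl⟩ := hred
      obtain ⟨K', hK'S, hxK'⟩ := hx
      have hK'sub : K' ⊆ ⋃₀ S := subset_sUnion_of_mem hK'S
      have hK'lt : K' < ⋃₀ S := hK'sub.lt_of_ne (hSC hK'S).2
      obtain ⟨B, hBC, hBirr, hxB, hBK'⟩ := ih K' hK'lt (hSC hK'S).1 hxK'
      exact ⟨B, hBC, hBirr, hxB, hBK'.trans hK'sub⟩
    · exact ⟨K, hK, hred, hx, subset_rfl⟩

lemma fL_subset (C : Set (Set U)) (X : Set U) : fL C X ⊆ X :=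
  sUnion_subset fun _ hK => hK.2

lemma mem_fFix_iff {C : Set (Set U)} {X : Set U} :
    X ∈ fFix C ↔ ∀ x ∈ X, ∃ K ∈ C, x ∈ K ∧ K ⊆ X := by
  refine ⟨fun hX x hx => ?_, fun h => (fL_subset C X).antisymm fun x hx => ?_⟩
  · obtain ⟨K, ⟨hKC, hKX⟩, hxK⟩ := (show fL C X = X from hX).ge hx
    exact ⟨K, hKC, hxK, hKX⟩
  · obtain ⟨K, hKC, hxK, hKX⟩ := h x hx
    exact ⟨K, ⟨hKC, hKX⟩, hxK⟩

lemma exists_mem_reduct_subset [Finite U] {C : Set (Set U)} {X : Set U} (hX : X ∈ fFix C)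
    {x : U} (hx : x ∈ X) : ∃ B ∈ reduct C, x ∈ B ∧ B ⊆ X := by
  obtain ⟨K, hKC, hxK, hKX⟩ := mem_fFix_iff.1 hX x hx
  obtain ⟨B, hBC, hBirr, hxB, hBK⟩ := exists_irreducible_subset C hKC hxK
  exact ⟨B, ⟨hBC, hBirr⟩, hxB, hBK.trans hKX⟩

lemma empty_mem_fFix (C : Set (Set U)) : ∅ ∈ fFix C :=
  (fL_subset C ∅).antisymm (empty_subset _)

lemma union_mem_fFix {C : Set (Set U)} {X Y : Set U} (hX : X ∈ fFix C) (hY : Y ∈ fFix C) :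
    X ∪ Y ∈ fFix C := by
  refine mem_fFix_iff.2 fun x hx => ?_
  rcases hx with hx | hx
  · obtain ⟨K, hKC, hxK, hKX⟩ := mem_fFix_iff.1 hX x hx
    exact ⟨K, hKC, hxK, hKX.trans subset_union_left⟩
  · obtain ⟨K, hKC, hxK, hKY⟩ := mem_fFix_iff.1 hY x hx
    exact ⟨K, hKC, hxK, hKY.trans subset_union_right⟩

section Partition

variable [Finite U] {C : Set (Set U)}

lemma subset_of_mem_reduct_of_mem_fFix (hdisj : (reduct C).PairwiseDisjoint id) {X : Set U}
    (hX : X ∈ fFix C) {B : Set U} (hB : B ∈ reduct C) {y : U} (hyB : y ∈ B) (hyX : y ∈ X) :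
    B ⊆ X := by
  obtain ⟨B', hB', hyB', hB'X⟩ := exists_mem_reduct_subset hX hyX
  have : B = B' := hdisj.elim hB hB' (not_disjoint_iff.2 ⟨y, hyB, hyB'⟩)
  exact this ▸ hB'X

lemma compl_mem_fFix (hcov : ⋃₀ reduct C = univ) (hdisj : (reduct C).PairwiseDisjoint id)
    {X : Set U} (hX : X ∈ fFix C) : Xᶜ ∈ fFix C := by
  refine mem_fFix_iff.2 fun x hx => ?_
  obtain ⟨B, hB, hxB⟩ := (hcov ▸ mem_univ x : x ∈ ⋃₀ reduct C)
  exact ⟨B, hB.1, hxB, fun y hyB hyX =>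
    hx (subset_of_mem_reduct_of_mem_fFix hdisj hX hB hyB hyX hxB)⟩

end Partition

theorem stmt18_general [Fintype U] (C : Set (Set U))
    (hcovirr : ⋃₀ {K | K ∈ C ∧ ¬ covReducible C K} = Set.univ)
    (hdisj : ∀ K₁ ∈ {K | K ∈ C ∧ ¬ covReducible C K},
      ∀ K₂ ∈ {K | K ∈ C ∧ ¬ covReducible C K}, K₁ ≠ K₂ → K₁ ∩ K₂ = ∅) :
    (∀ X ∈ fFix C, Xᶜ ∈ fFix C) ∧
    (∅ : Set U) ∈ fFix C ∧ (Set.univ : Set U) ∈ fFix C ∧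
    ∀ X ∈ fFix C, ∀ Y ∈ fFix C, X ∪ Y ∈ fFix C ∧ X ∩ Y ∈ fFix C := by
  have hpart : (reduct C).PairwiseDisjoint id := fun K₁ h₁ K₂ h₂ hne =>
    disjoint_iff_inter_eq_empty.2 (hdisj K₁ h₁ K₂ h₂ hne)
  have hcompl : ∀ X ∈ fFix C, Xᶜ ∈ fFix C := fun X hX => compl_mem_fFix hcovirr hpart hX
  refine ⟨hcompl, empty_mem_fFix C, compl_empty ▸ hcompl ∅ (empty_mem_fFix C),
    fun X hX Y hY => ⟨union_mem_fFix hX hY, ?_⟩⟩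
  rw [← compl_compl (X ∩ Y), compl_inter]
  exact hcompl _ (union_mem_fFix (hcompl X hX) (hcompl Y hY))

/-- if the family of irreducible elements of `C` (that is,
`reduct(C)`) is a partition of `U`, then `F` is closed under complements;
together with `∅, U ∈ F` and the closure of `F` under `∪` and `∩`, this makes
`(F, ⊆)` a Boolean lattice. -/
theorem stmt18 [Fintype U] [Nonempty U] (C : Set (Set U))
    (hne : ∀ K ∈ C, K.Nonempty) (hcov : ⋃₀ C = Set.univ)
    (hcovirr : ⋃₀ {K | K ∈ C ∧ ¬ covReducible C K} = Set.univ)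
    (hdisj : ∀ K₁ ∈ {K | K ∈ C ∧ ¬ covReducible C K},
      ∀ K₂ ∈ {K | K ∈ C ∧ ¬ covReducible C K}, K₁ ≠ K₂ → K₁ ∩ K₂ = ∅) :
    (∀ X ∈ fFix C, Xᶜ ∈ fFix C) ∧
    (∅ : Set U) ∈ fFix C ∧ (Set.univ : Set U) ∈ fFix C ∧
    ∀ X ∈ fFix C, ∀ Y ∈ fFix C, X ∪ Y ∈ fFix C ∧ X ∩ Y ∈ fFix C :=
  stmt18_general C hcovirr hdisj
end
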